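/- arXiv:2505.07958 — 3 statements merged into one kernel-verified Lean document; each statement's English description precedes it below -/
import Mathlib

section
/- Let G ⊆ F be σ-fields on a set S, let μ be a probability measure on F, and let B ∈ F. Then the infimum inf_{A ∈ G} μ(A △ B) is achieved by the set A* = {x : E[1_B | G](x) ≥ 1/2}, i.e., μ(A* △ B) ≤ μ(A △ B) for every A ∈ G. -/
open MeasureTheory

/-- The infimum of `μ (A △ B)` over `G`-measurable sets `A` is achieved by rounding the
conditional expectation `E[1_B | G]` at level `1/2`. -/
theorem measure_symmDiff_condexp_round_le
    {S : Type*} (G : MeasurableSpace S) {F : MeasurableSpace S} (hG : G ≤ F)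
    (μ : Measure S) [IsProbabilityMeasure μ]
    (B : Set S) (hB : MeasurableSet B) :
    ∀ A, MeasurableSet[G] A →
      μ (symmDiff {x | (1/2 : ℝ) ≤ (μ[B.indicator (fun _ => (1:ℝ)) | G]) x} B)
        ≤ μ (symmDiff A B) := by
  intro A hA
  set f : S → ℝ := μ[B.indicator (fun _ => (1:ℝ)) | G] with hf
  set Ast : Set S := {x | (1/2 : ℝ) ≤ f x} with hAst
  have hf_int : Integrable f μ := integrable_condExp
  have hInd : Integrable (B.indicator fun _ => (1:ℝ)) μ :=
    (integrable_const (1:ℝ)).indicator hB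
  have hAstG : MeasurableSet[G] Ast :=
    stronglyMeasurable_condExp.measurable measurableSet_Ici
  -- the key identity for any G-measurable set
  have key : ∀ C : Set S, MeasurableSet[G] C →
      (μ (symmDiff C B)).toReal = (μ C).toReal + (μ B).toReal - 2 * ∫ x in C, f x ∂μ := by
    intro C hC
    have hCF : MeasurableSet C := hG _ hC
    have hint : ∫ x in C, f x ∂μ = (μ (C ∩ B)).toReal := by
      rw [hf, setIntegral_condExp hG hInd hC, setIntegral_indicator hB]
      simp [Measure.restrict_apply (hCF.inter hB), measureReal_def]
    have hsymm : μ (symmDiff C B) = μ (C \ B) + μ (B \ C) := by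
      rw [Set.symmDiff_def]
      exact measure_union (disjoint_sdiff_sdiff) (hB.diff hCF)
    have h1 : μ (C ∩ B) + μ (C \ B) = μ C := measure_inter_add_diff C hB
    have h2 : μ (B ∩ C) + μ (B \ C) = μ B := measure_inter_add_diff B hCF
    have hBC : B ∩ C = C ∩ B := Set.inter_comm B C
    have t1 : (μ (C ∩ B)).toReal + (μ (C \ B)).toReal = (μ C).toReal := by
      rw [← ENNReal.toReal_add (measure_ne_top μ _) (measure_ne_top μ _), h1]
    have t2 : (μ (C ∩ B)).toReal + (μ (B \ C)).toReal = (μ B).toReal := by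
      rw [← ENNReal.toReal_add (measure_ne_top μ _) (measure_ne_top μ _), ← hBC, h2]
    have t3 : (μ (symmDiff C B)).toReal = (μ (C \ B)).toReal + (μ (B \ C)).toReal := by
      rw [hsymm, ENNReal.toReal_add (measure_ne_top μ _) (measure_ne_top μ _)]
    rw [hint]
    linarith
  -- reduce to comparing integrals of g = 1 - 2 f
  set g : S → ℝ := fun x => 1 - 2 * f x with hg
  have hg_int : Integrable g μ := (integrable_const (1:ℝ)).sub (hf_int.const_mul 2)
  have hmeasAst : MeasurableSet Ast := hG _ hAstG
  have hmeasA : MeasurableSet A := hG _ hA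
  have hintg : ∀ C : Set S, MeasurableSet C →
      ∫ x in C, g x ∂μ = (μ C).toReal - 2 * ∫ x in C, f x ∂μ := by
    intro C hC
    rw [hg]
    rw [integral_sub (integrable_const (1:ℝ)).integrableOn ((hf_int.const_mul 2).integrableOn)]
    rw [integral_const, integral_const_mul]
    simp [measureReal_def]
  -- ∫_{Ast} g ≤ ∫_A g
  have hsplitAst : ∫ x in Ast ∩ A, g x ∂μ + ∫ x in Ast \ A, g x ∂μ = ∫ x in Ast, g x ∂μ :=
    integral_inter_add_diff hmeasA hg_int.integrableOn
  have hsplitA : ∫ x in A ∩ Ast, g x ∂μ + ∫ x in A \ Ast, g x ∂μ = ∫ x in A, g x ∂μ :=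
    integral_inter_add_diff hmeasAst hg_int.integrableOn
  have hcomm : Ast ∩ A = A ∩ Ast := Set.inter_comm _ _
  have hneg : ∫ x in Ast \ A, g x ∂μ ≤ 0 := by
    apply setIntegral_nonpos (hmeasAst.diff hmeasA)
    intro x hx
    have : (1/2 : ℝ) ≤ f x := hx.1
    simp only [hg]
    linarith
  have hpos : 0 ≤ ∫ x in A \ Ast, g x ∂μ := by
    apply setIntegral_nonneg (hmeasA.diff hmeasAst)
    intro x hx
    have : ¬ (1/2 : ℝ) ≤ f x := hx.2
    simp only [hg]
    linarith
  have hgle : ∫ x in Ast, g x ∂μ ≤ ∫ x in A, g x ∂μ := by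
    rw [← hsplitAst, ← hsplitA, hcomm]
    linarith
  have hkeyAst := key Ast hAstG
  have hkeyA := key A hA
  have hiAst := hintg Ast hmeasAst
  have hiA := hintg A hmeasA
  have hto : (μ (symmDiff Ast B)).toReal ≤ (μ (symmDiff A B)).toReal := by linarith
  exact (ENNReal.toReal_le_toReal (measure_ne_top μ _) (measure_ne_top μ _)).mp hto
end

section
/- Let (S, ρ) be a separable metric space with Borel probability measure μ of Vitali type with respect to ρ. Let X₁, X₂, ... ~ μ i.i.d. and R₁, R₂, ... ~ ν i.i.d., independent of the X's, where ν is a distribution on [0,∞) with ν((0,ε)) > 0 for every ε > 0. Let Fₙ = σ(B_{R₁}(X₁),...,B_{Rₙ}(Xₙ)). Then almost surely ⋁ₙ Fₙ and the Borel σ-field of S differ only by μ-null sets. -/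
/-!
If `x ∈ U` is in the support of `μ` and `U` is open, the pairs `(y, r)` with `x ∈ B(y, r) ⊆ U`
have positive `μ ⊗ ν`-measure, because `ν` charges every interval `(0, ε)` and `μ` charges every
ball around `x`. By the second Borel–Cantelli lemma, almost surely some sampled ball contains `x`
and lies in `U`; by Fubini, almost surely the sampled balls lying in `U` cover `μ`-almost all of
`U`. Their union is measurable for the empirical σ-field, so running this over a countable basis
shows that every Borel set agrees `μ`-a.e. with an empirically measurable set.
-/

open MeasureTheory ProbabilityTheory Metric Set Filter TopologicalSpace

/-- A measure `μ` on a metric space is of Vitali type if from every fine cover of a set `A`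
by balls one can extract a countable disjoint subfamily covering `A` up to a `μ`-null set. -/
def VitaliType {S : Type*} [MetricSpace S] [MeasurableSpace S] (μ : Measure S) : Prop :=
  ∀ (A : Set S) (C : Set (S × ℝ)),
    (∀ x ∈ A, ∀ ε > 0, ∃ r, 0 < r ∧ r < ε ∧ (x, r) ∈ C) →
    ∃ D ⊆ C, D.Countable ∧
      D.PairwiseDisjoint (fun p => Metric.ball p.1 p.2) ∧
      μ (A \ ⋃ p ∈ D, Metric.ball p.1 p.2) = 0

namespace MeasureTheory.Measure

variable {α : Type*} [MeasurableSpace α]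

abbrev aeClosure (μ : Measure α) (m : MeasurableSpace α) : MeasurableSpace α where
  MeasurableSet' B := ∃ A, MeasurableSet[m] A ∧ A =ᵐ[μ] B
  measurableSet_empty := ⟨∅, @MeasurableSet.empty _ m, .rfl⟩
  measurableSet_compl _ := fun ⟨A, hA, hAB⟩ => ⟨Aᶜ, hA.compl, hAB.compl⟩
  measurableSet_iUnion _ hB := by
    choose A hA hAB using hB
    exact ⟨⋃ i, A i, .iUnion hA, Filter.EventuallyEq.countable_iUnion hAB⟩

end MeasureTheory.Measure

namespace ProbabilityTheory

theorem iIndepFun.ae_frequently_mem {Ω β : Type*} [MeasurableSpace Ω] [MeasurableSpace β]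
    {P : Measure Ω} {Z : ℕ → Ω → β} (hZ : ∀ n, Measurable (Z n)) (hind : iIndepFun Z P)
    {ρ : Measure β} (hlaw : ∀ n, P.map (Z n) = ρ) {T : Set β} (hT : MeasurableSet T)
    (hρT : ρ T ≠ 0) : ∀ᵐ ω ∂P, ∃ᶠ n in atTop, Z n ω ∈ T := by
  have := hind.isProbabilityMeasure
  have hmeas : ∀ n, MeasurableSet (Z n ⁻¹' T) := fun n => hZ n hT
  have hsum : ∑' n, P (Z n ⁻¹' T) = ⊤ := by
    simp_rw [← Measure.map_apply (hZ _) hT, hlaw]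
    exact ENNReal.tsum_const_eq_top_of_ne_zero hρT
  have hindT : iIndepSet (fun n => Z n ⁻¹' T) P :=
    (iIndepSet_iff_meas_biInter hmeas).2 fun s =>
      hind.measure_inter_preimage_eq_mul s (sets := fun _ => T) fun _ _ => hT
  have hlimsup := measure_limsup_eq_one hmeas hindT hsum
  rw [← measure_univ (μ := P), ← ae_mem_iff_measure_eq
    (MeasurableSet.measurableSet_limsup hmeas).nullMeasurableSet] at hlimsup
  filter_upwards [hlimsup] with ω hω
  exact mem_limsup_iff_frequently_mem.1 hω

end ProbabilityTheory

section EmpiricalBalls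

variable {S : Type*} [MetricSpace S]

abbrev empiricalBallSigma (p : ℕ → S × ℝ) : MeasurableSpace S :=
  ⨆ n, MeasurableSpace.generateFrom {s | ∃ j < n, s = ball (p j).1 (p j).2}

def innerBallCover (p : ℕ → S × ℝ) (U : Set S) : Set S :=
  ⋃ n, ⋃ (_ : ball (p n).1 (p n).2 ⊆ U), ball (p n).1 (p n).2

theorem innerBallCover_subset (p : ℕ → S × ℝ) (U : Set S) : innerBallCover p U ⊆ U :=
  iUnion₂_subset fun _ h => h

theorem measurableSet_innerBallCover (p : ℕ → S × ℝ) (U : Set S) :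
    MeasurableSet[empiricalBallSigma p] (innerBallCover p U) :=
  .iUnion fun n => .iUnion fun _ =>
    le_iSup (fun m => MeasurableSpace.generateFrom {s | ∃ j < m, s = ball (p j).1 (p j).2}) (n + 1)
      _ (MeasurableSpace.measurableSet_generateFrom ⟨n, n.lt_succ_self, rfl⟩)

theorem isClosed_setOf_ball_subset (U : Set S) : IsClosed {p : S × ℝ | ball p.1 p.2 ⊆ U} := by
  have : {p : S × ℝ | ball p.1 p.2 ⊆ U} = ⋂ z ∈ Uᶜ, {p | p.2 ≤ dist z p.1} := by
    ext p
    simp [subset_def, not_imp_comm (a := _ ∈ U)]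
  rw [this]
  exact isClosed_biInter fun z _ =>
    isClosed_le continuous_snd (continuous_const.dist continuous_fst)

variable [MeasurableSpace S]

theorem empiricalBallSigma_le (p : ℕ → S × ℝ) [OpensMeasurableSpace S] :
    empiricalBallSigma p ≤ ‹MeasurableSpace S› :=
  iSup_le fun _ => MeasurableSpace.generateFrom_le fun _ ⟨_, _, hs⟩ => hs ▸ measurableSet_ball

theorem le_aeClosure_empiricalBallSigma [SecondCountableTopology S] [BorelSpace S]
    {μ : Measure S} {p : ℕ → S × ℝ} {𝓑 : Set (Set S)} (h𝓑 : IsTopologicalBasis 𝓑)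
    (hcover : ∀ U ∈ 𝓑, μ (U \ innerBallCover p U) = 0) :
    ‹MeasurableSpace S› ≤ μ.aeClosure (empiricalBallSigma p) := by
  exact (BorelSpace.measurable_eq.trans h𝓑.borel_eq_generateFrom).le.trans
    (MeasurableSpace.generateFrom_le fun U hU => ⟨innerBallCover p U,
      measurableSet_innerBallCover p U,
      (innerBallCover_subset p U).eventuallyLE.antisymm (ae_le_set.2 (hcover U hU))⟩)

theorem measurableSet_setOf_mem_ball_subset [SecondCountableTopology S] [OpensMeasurableSpace S]
    (x : S) (U : Set S) : MeasurableSet {p : S × ℝ | x ∈ ball p.1 p.2 ∧ ball p.1 p.2 ⊆ U} :=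
  (measurableSet_lt (measurable_const.dist measurable_fst) measurable_snd).inter
    (isClosed_setOf_ball_subset U).measurableSet

theorem measurableSet_setOf_mem_innerBallCover [SecondCountableTopology S]
    [OpensMeasurableSpace S] {Ω : Type*} [MeasurableSpace Ω] {Z : ℕ → Ω → S × ℝ}
    (hZ : ∀ n, Measurable (Z n)) (U : Set S) :
    MeasurableSet {q : S × Ω | q.1 ∈ innerBallCover (Z · q.2) U} := by
  have : {q : S × Ω | q.1 ∈ innerBallCover (Z · q.2) U} =
      ⋃ n, (fun q => (q.1, Z n q.2)) ⁻¹'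
        {p : S × (S × ℝ) | dist p.1 p.2.1 < p.2.2 ∧ ball p.2.1 p.2.2 ⊆ U} := by
    ext q
    simp [innerBallCover, and_comm]
  rw [this]
  refine .iUnion fun n => (measurable_fst.prodMk ((hZ n).comp measurable_snd)) ?_
  exact (measurableSet_lt (measurable_fst.dist (measurable_fst.comp measurable_snd))
    (measurable_snd.comp measurable_snd)).inter
      ((isClosed_setOf_ball_subset U).measurableSet.preimage measurable_snd)

theorem measure_prod_setOf_mem_ball_subset_ne_zero [SecondCountableTopology S]
    [OpensMeasurableSpace S] {μ : Measure S} [SFinite μ] {ν : Measure ℝ} [SFinite ν]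
    (hν : ∀ ε > 0, 0 < ν (Ioo 0 ε)) {U : Set S} (hU : IsOpen U) {x : S} (hxU : x ∈ U)
    (hx : x ∈ μ.support) :
    μ.prod ν {p : S × ℝ | x ∈ ball p.1 p.2 ∧ ball p.1 p.2 ⊆ U} ≠ 0 := by
  have hT := measurableSet_setOf_mem_ball_subset x U
  obtain ⟨ε, hε, hεU⟩ := Metric.isOpen_iff.1 hU x hxU
  have hslice : ∀ r ∈ Ioo 0 (ε / 2), ∀ y ∈ ball x r, x ∈ ball y r ∧ ball y r ⊆ U := by
    intro r hr y hy
    refine ⟨mem_ball_comm.1 hy, (ball_subset_ball' ?_).trans hεU⟩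
    linarith [mem_ball.1 hy, hr.2]
  intro h0
  rw [Measure.prod_apply_symm hT, lintegral_eq_zero_iff (measurable_measure_prodMk_right hT)]
    at h0
  refine (hν _ (half_pos hε)).ne' (measure_eq_zero_iff_ae_notMem.2 ?_)
  filter_upwards [h0] with r hr hrε
  exact ((Measure.mem_support_iff_forall x).1 hx _ (ball_mem_nhds x hrε.1)).ne'
    (measure_mono_null (hslice r hrε) hr)

theorem ae_measure_diff_innerBallCover_eq_zero [SecondCountableTopology S] [OpensMeasurableSpace S]
    {μ : Measure S} [SFinite μ] {ν : Measure ℝ} [SFinite ν] (hν : ∀ ε > 0, 0 < ν (Ioo 0 ε))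
    {Ω : Type*} [MeasurableSpace Ω] {P : Measure Ω} {Z : ℕ → Ω → S × ℝ}
    (hZ : ∀ n, Measurable (Z n)) (hind : iIndepFun Z P) (hlaw : ∀ n, P.map (Z n) = μ.prod ν)
    {U : Set S} (hU : IsOpen U) :
    ∀ᵐ ω ∂P, μ (U \ innerBallCover (Z · ω) U) = 0 := by
  have := hind.isProbabilityMeasure
  have hpoint : ∀ᵐ x ∂μ, ∀ᵐ ω ∂P, x ∈ U → x ∈ innerBallCover (Z · ω) U := by
    filter_upwards [Measure.support_mem_ae] with x hx
    by_cases hxU : x ∈ U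
    · filter_upwards [hind.ae_frequently_mem hZ hlaw (measurableSet_setOf_mem_ball_subset x U)
        (measure_prod_setOf_mem_ball_subset_ne_zero hν hU hxU hx)] with ω hω _
      obtain ⟨n, hxn, hnU⟩ := hω.exists
      exact mem_iUnion₂.2 ⟨n, hnU, hxn⟩
    · exact .of_forall fun _ h => absurd h hxU
  have hW : MeasurableSet {q : S × Ω | q.1 ∈ U → q.1 ∈ innerBallCover (Z · q.2) U} := by
    simp only [imp_iff_not_or, ofPred_or]
    exact (hU.measurableSet.preimage measurable_fst).compl.union
      (measurableSet_setOf_mem_innerBallCover hZ U)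
  filter_upwards [(Measure.ae_ae_comm hW).1 hpoint] with ω hω
  exact ae_le_set.1 hω

end EmpiricalBalls

theorem empirical_ball_sigma_fields_recover_borel_general
    {S : Type*} [MetricSpace S] [TopologicalSpace.SeparableSpace S] [MeasurableSpace S] [BorelSpace S]
    (μ : Measure S) [IsProbabilityMeasure μ]
    (ν : Measure ℝ) [IsProbabilityMeasure ν]
    (hνpos : ∀ ε > 0, 0 < ν (Set.Ioo 0 ε))
    {Ω : Type*} [MeasurableSpace Ω] (P : Measure Ω)
    (X : ℕ → Ω → S) (R : ℕ → Ω → ℝ)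
    (hXmeas : ∀ n, Measurable (X n)) (hRmeas : ∀ n, Measurable (R n))
    (hdist : ∀ n, Measure.map (fun ω => (X n ω, R n ω)) P = μ.prod ν)
    (hindep : iIndepFun (fun n ω => (X n ω, R n ω)) P) :
    ∀ᵐ ω ∂P,
      (∀ A, MeasurableSet[⨆ n, MeasurableSpace.generateFrom
            {s | ∃ j < n, s = Metric.ball (X j ω) (R j ω)}] A →
        ∃ B, MeasurableSet B ∧ μ (symmDiff A B) = 0) ∧
      (∀ B, MeasurableSet B →
        ∃ A, MeasurableSet[⨆ n, MeasurableSpace.generateFrom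
            {s | ∃ j < n, s = Metric.ball (X j ω) (R j ω)}] A ∧ μ (symmDiff A B) = 0) := by
  obtain ⟨𝓑, h𝓑c, -, h𝓑⟩ := exists_countable_basis S
  have hcover : ∀ᵐ ω ∂P, ∀ U ∈ 𝓑, μ (U \ innerBallCover (fun n => (X n ω, R n ω)) U) = 0 :=
    (ae_ball_iff h𝓑c).2 fun U hU => ae_measure_diff_innerBallCover_eq_zero hνpos
      (fun n => (hXmeas n).prodMk (hRmeas n)) hindep hdist (h𝓑.isOpen hU)
  filter_upwards [hcover] with ω hω
  let p n := (X n ω, R n ω)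
  refine ⟨fun A hA => ⟨A, empiricalBallSigma_le p A hA, by simp⟩, fun B hB => ?_⟩
  obtain ⟨A, hA, hAB⟩ := le_aeClosure_empiricalBallSigma (p := p) h𝓑 hω B hB
  exact ⟨A, hA, measure_symmDiff_eq_zero_iff.2 hAB⟩

/-- Monotone-convergence law of large numbers in a separable metric space: sampling iid balls
with random centers `Xₙ ~ μ` and random radii `Rₙ ~ ν`, the join of the empirical σ-fields
almost surely differs from the Borel σ-field only by `μ`-null sets. -/
theorem empirical_ball_sigma_fields_recover_borel
    {S : Type*} [MetricSpace S] [TopologicalSpace.SeparableSpace S] [MeasurableSpace S] [BorelSpace S]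
    (μ : Measure S) [IsProbabilityMeasure μ] (hμ : VitaliType μ)
    (ν : Measure ℝ) [IsProbabilityMeasure ν] (hν : ν (Set.Iio 0) = 0)
    (hνpos : ∀ ε > 0, 0 < ν (Set.Ioo 0 ε))
    {Ω : Type*} [MeasurableSpace Ω] (P : Measure Ω) [IsProbabilityMeasure P]
    (X : ℕ → Ω → S) (R : ℕ → Ω → ℝ)
    (hXmeas : ∀ n, Measurable (X n)) (hRmeas : ∀ n, Measurable (R n))
    (hdist : ∀ n, Measure.map (fun ω => (X n ω, R n ω)) P = μ.prod ν)
    (hindep : iIndepFun (fun n ω => (X n ω, R n ω)) P) :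
    ∀ᵐ ω ∂P,
      (∀ A, MeasurableSet[⨆ n, MeasurableSpace.generateFrom
            {s | ∃ j < n, s = Metric.ball (X j ω) (R j ω)}] A →
        ∃ B, MeasurableSet B ∧ μ (symmDiff A B) = 0) ∧
      (∀ B, MeasurableSet B →
        ∃ A, MeasurableSet[⨆ n, MeasurableSpace.generateFrom
            {s | ∃ j < n, s = Metric.ball (X j ω) (R j ω)}] A ∧ μ (symmDiff A B) = 0) :=
  empirical_ball_sigma_fields_recover_borel_general μ ν hνpos P X R hXmeas hRmeas hdist hindep
end

section
/- Consider the probability space ([0,1], Borel, Lebesgue). Given any points 0 < x₁ < ... < xₙ < 1, let Fₙ = σ([0,x₁],...,[0,xₙ]). Then there exists a function f with ‖f‖_{L^∞} ≤ 1 such that E[f | Fₙ] = 0 Lebesgue-a.s. and ‖E[f | Fₙ] − f‖_{L¹} = 1. In particular, the Hausdorff distance d_λ(Fₙ, B) = sup_{‖f‖_∞ ≤ 1} ‖E[f|Fₙ] − E[f|B]‖_{L¹} is at least 1 for every n. -/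
/-!
Pad `0 ≤ x₁ ≤ ⋯ ≤ xₙ ≤ 1` into a monotone sequence `y` and let `f` be `+1` on the left half and
`-1` on the right half of every atom `(y k, y (k + 1)]`. Each atom carries zero integral of `f`,
so `∫ f` vanishes over every `[0, xᵢ]` and over `[0, 1]`. These intervals form a π-system
generating `Fₙ`, so the Dynkin argument makes `∫ f` vanish over every `Fₙ`-set, i.e.
`E[f | Fₙ] = 0`; since `|f| = 1`, `‖E[f | Fₙ] - f‖₁ = 1`. The supremum is finite because
`‖E[g | F] - g‖₁ ≤ 2 ‖g‖₁`.
-/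

open MeasureTheory Set

section CondExp

variable {α : Type*} {m m₀ : MeasurableSpace α} {μ : Measure α}
  {C : Set (Set α)} {f : α → ℝ}

theorem setIntegral_eq_zero_of_isPiSystem (hC : IsPiSystem C)
    (hm : MeasurableSpace.generateFrom C ≤ m₀) (hf : Integrable f μ)
    (h_univ : ∫ a, f a ∂μ = 0) (h_gen : ∀ s ∈ C, ∫ a in s, f a ∂μ = 0)
    {s : Set α} (hs : MeasurableSet[MeasurableSpace.generateFrom C] s) :
    ∫ a in s, f a ∂μ = 0 := by
  induction s, hs using MeasurableSpace.induction_on_inter rfl hC with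
  | empty => simp
  | basic t ht => exact h_gen t ht
  | compl t ht ih =>
    have := integral_add_compl (hm t ht) hf
    linarith
  | iUnion g hdisj hg ih =>
    rw [integral_iUnion (fun i => hm _ (hg i)) hdisj hf.integrableOn]
    simp [ih]

theorem condExp_ae_eq_zero_of_isPiSystem [IsFiniteMeasure μ] (hC : IsPiSystem C)
    (hm : MeasurableSpace.generateFrom C ≤ m₀) (hf : Integrable f μ)
    (h_univ : ∫ a, f a ∂μ = 0) (h_gen : ∀ s ∈ C, ∫ a in s, f a ∂μ = 0) :
    μ[f | MeasurableSpace.generateFrom C] =ᵐ[μ] 0 := by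
  refine (ae_eq_condExp_of_forall_setIntegral_eq hm hf (fun _ _ _ => integrableOn_zero)
    (fun s hs _ => ?_) aestronglyMeasurable_const).symm
  rw [setIntegral_eq_zero_of_isPiSystem hC hm hf h_univ h_gen hs, integral_zero]

theorem integral_abs_condExp_sub_le (hf : Integrable f μ) :
    ∫ a, |μ[f | m] a - f a| ∂μ ≤ 2 * ∫ a, |f a| ∂μ := by
  calc ∫ a, |μ[f | m] a - f a| ∂μ ≤ ∫ a, (|μ[f | m] a| + |f a|) ∂μ :=
        integral_mono (integrable_condExp.sub hf).abs (integrable_condExp.abs.add hf.abs)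
          fun a => abs_sub _ _
    _ = ∫ a, |μ[f | m] a| ∂μ + ∫ a, |f a| ∂μ :=
        integral_add integrable_condExp.abs hf.abs
    _ ≤ 2 * ∫ a, |f a| ∂μ := by linarith [integral_abs_condExp_le (m := m) (μ := μ) f]

theorem integral_abs_condExp_sub_le_two [IsProbabilityMeasure μ] (hf : AEStronglyMeasurable f μ)
    (hf_le : ∀ a, |f a| ≤ 1) :
    ∫ a, |μ[f | m] a - f a| ∂μ ≤ 2 := by
  have hf_int : Integrable f μ := .of_bound hf 1 (ae_of_all _ hf_le)
  have h_abs : ∫ a, |f a| ∂μ ≤ 1 := by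
    simpa using integral_mono hf_int.abs (integrable_const 1) hf_le
  linarith [integral_abs_condExp_sub_le (m := m) hf_int]

end CondExp

theorem isPiSystem_Icc_const_left {α ι : Type*} [LinearOrder α] (a : α) (b : ι → α) :
    IsPiSystem {s | ∃ i, s = Icc a (b i)} := by
  rintro _ ⟨i, rfl⟩ _ ⟨j, rfl⟩ -
  rcases le_total (b i) (b j) with h | h
  · exact ⟨i, by rw [Icc_inter_Icc, max_self, min_eq_left h]⟩
  · exact ⟨j, by rw [Icc_inter_Icc, max_self, min_eq_right h]⟩

section HalvesSign

variable (y : ℕ → ℝ)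

def leftHalves : Set ℝ := ⋃ k, Ioc (y k) ((y k + y (k + 1)) / 2)

open Classical in
noncomputable def halvesSign (t : ℝ) : ℝ := if t ∈ leftHalves y then 1 else -1

variable {y}

theorem abs_halvesSign (t : ℝ) : |halvesSign y t| = 1 := by
  unfold halvesSign; split_ifs <;> simp

theorem measurable_halvesSign : Measurable (halvesSign y) :=
  Measurable.ite (MeasurableSet.iUnion fun _ => measurableSet_Ioc) measurable_const
    measurable_const

theorem intervalIntegrable_halvesSign (a b : ℝ) : IntervalIntegrable (halvesSign y) volume a b :=
  intervalIntegrable_const.mono_fun' measurable_halvesSign.aestronglyMeasurable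
    (ae_of_all _ fun t => (abs_halvesSign t).le)

theorem halvesSign_eq_one {k : ℕ} {t : ℝ} (ht : t ∈ Ioc (y k) ((y k + y (k + 1)) / 2)) :
    halvesSign y t = 1 :=
  if_pos (mem_iUnion_of_mem k ht)

theorem halvesSign_eq_neg_one (hy : Monotone y) {k : ℕ} {t : ℝ}
    (ht : t ∈ Ioc ((y k + y (k + 1)) / 2) (y (k + 1))) : halvesSign y t = -1 := by
  refine if_neg fun hmem => ?_
  obtain ⟨j, htj⟩ := mem_iUnion.mp hmem
  have hj := hy (Nat.le_succ j)
  have hk := hy (Nat.le_succ k)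
  rcases lt_trichotomy j k with hjk | rfl | hkj
  · linarith [hy (Nat.succ_le_of_lt hjk), htj.2, ht.1]
  · linarith [htj.2, ht.1]
  · linarith [hy (Nat.succ_le_of_lt hkj), htj.1, ht.2]

theorem integral_halvesSign_atom (hy : Monotone y) (k : ℕ) :
    ∫ t in y k..y (k + 1), halvesSign y t = 0 := by
  have hk := hy (Nat.le_succ k)
  have hkc : y k ≤ (y k + y (k + 1)) / 2 := by linarith
  have hck : (y k + y (k + 1)) / 2 ≤ y (k + 1) := by linarith
  set c := (y k + y (k + 1)) / 2
  have hleft : ∫ t in y k..c, halvesSign y t = c - y k := by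
    rw [intervalIntegral.integral_of_le hkc,
      setIntegral_congr_fun measurableSet_Ioc (g := fun _ => 1) fun t ht => halvesSign_eq_one ht]
    rw [setIntegral_const, Real.volume_real_Ioc_of_le hkc, smul_eq_mul, mul_one]
  have hright : ∫ t in c..y (k + 1), halvesSign y t = -(y (k + 1) - c) := by
    rw [intervalIntegral.integral_of_le hck,
      setIntegral_congr_fun measurableSet_Ioc (g := fun _ => -1)
        fun t ht => halvesSign_eq_neg_one hy ht]
    rw [setIntegral_const, Real.volume_real_Ioc_of_le hck, smul_eq_mul, mul_neg_one]
  rw [← intervalIntegral.integral_add_adjacent_intervals (intervalIntegrable_halvesSign _ _)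
    (intervalIntegrable_halvesSign _ _), hleft, hright]
  ring

theorem integral_halvesSign (hy : Monotone y) (k : ℕ) :
    ∫ t in y 0..y k, halvesSign y t = 0 := by
  rw [← intervalIntegral.sum_integral_adjacent_intervals
    fun _ _ => intervalIntegrable_halvesSign _ _]
  exact Finset.sum_eq_zero fun i _ => integral_halvesSign_atom hy i

theorem setIntegral_Icc_halvesSign (hy : Monotone y) {k : ℕ} {b : ℝ} (hk : y k ≤ b) :
    ∫ t in Icc (y 0) (y k), halvesSign y t ∂(volume.restrict (Icc (y 0) b)) = 0 := by
  rw [Measure.restrict_restrict measurableSet_Icc, inter_eq_left.mpr (Icc_subset_Icc le_rfl hk),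
    integral_Icc_eq_integral_Ioc, ← intervalIntegral.integral_of_le (hy k.zero_le)]
  exact integral_halvesSign hy k

end HalvesSign

def partitionPoints {n : ℕ} (x : Fin n → ℝ) : ℕ → ℝ
  | 0 => 0
  | k + 1 => if h : k < n then x ⟨k, h⟩ else 1

theorem monotone_partitionPoints {n : ℕ} {x : Fin n → ℝ} (hx : Monotone x)
    (h0 : ∀ i, 0 ≤ x i) (h1 : ∀ i, x i ≤ 1) : Monotone (partitionPoints x) := by
  refine monotone_nat_of_le_succ fun k => ?_
  rcases k with _ | k
  · simp only [partitionPoints]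
    split_ifs <;> simp [h0]
  · simp only [partitionPoints]
    split_ifs with hk hk' hk'
    · exact hx (Fin.mk_le_mk.mpr k.le_succ)
    · exact h1 _
    · omega
    · rfl

/-- Hausdorff convergence of empirical σ-fields fails: on `([0,1], Borel, Leb)`, for any
partition points `0 < x₁ < ⋯ < xₙ < 1` generating `Fₙ = σ([0,x₁],…,[0,xₙ])` there is a
function `f` with `‖f‖_∞ ≤ 1`, `E[f | Fₙ] = 0` a.e. and `‖E[f | Fₙ] − f‖_{L¹} = 1`; in
particular the Hausdorff distance from `Fₙ` to the Borel σ-field is at least 1. -/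
theorem hausdorff_distance_lower_bound
    (n : ℕ) (x : Fin n → ℝ) (hx : StrictMono x)
    (h0 : ∀ i, 0 < x i) (h1 : ∀ i, x i < 1) :
    (∃ f : ℝ → ℝ, Measurable f ∧ (∀ t, |f t| ≤ 1) ∧
      (volume.restrict (Set.Icc (0:ℝ) 1))[f |
          MeasurableSpace.generateFrom {s | ∃ i, s = Set.Icc (0:ℝ) (x i)}]
        =ᵐ[volume.restrict (Set.Icc (0:ℝ) 1)] 0 ∧
      ∫ t, |((volume.restrict (Set.Icc (0:ℝ) 1))[f |
          MeasurableSpace.generateFrom {s | ∃ i, s = Set.Icc (0:ℝ) (x i)}]) t - f t|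
        ∂(volume.restrict (Set.Icc (0:ℝ) 1)) = 1) ∧
    1 ≤ ⨆ f : {f : ℝ → ℝ // Measurable f ∧ ∀ t, |f t| ≤ 1},
      ∫ t, |((volume.restrict (Set.Icc (0:ℝ) 1))[f.1 |
          MeasurableSpace.generateFrom {s | ∃ i, s = Set.Icc (0:ℝ) (x i)}]) t - f.1 t|
        ∂(volume.restrict (Set.Icc (0:ℝ) 1)) := by
  set μ := volume.restrict (Icc (0:ℝ) 1)
  have : IsProbabilityMeasure μ := ⟨by simp [μ]⟩
  set C : Set (Set ℝ) := {s | ∃ i, s = Icc 0 (x i)}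
  set y := partitionPoints x
  have hy : Monotone y :=
    monotone_partitionPoints hx.monotone (fun i => (h0 i).le) (fun i => (h1 i).le)
  have hf_le : ∀ t, |halvesSign y t| ≤ 1 := fun t => (abs_halvesSign t).le
  have h_univ : ∫ t, halvesSign y t ∂μ = 0 := by
    have hy1 : y (n + 1) = 1 := by simp [y, partitionPoints]
    have h := setIntegral_Icc_halvesSign hy hy1.le
    rwa [hy1, Measure.restrict_restrict measurableSet_Icc, inter_self] at h
  have h_gen : ∀ s ∈ C, ∫ t in s, halvesSign y t ∂μ = 0 := by
    rintro _ ⟨i, rfl⟩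
    have hyi : y (i + 1) = x i := by simp [y, partitionPoints]
    have h := setIntegral_Icc_halvesSign hy (b := 1) (hyi ▸ (h1 i).le)
    rwa [hyi] at h
  have hcond : μ[halvesSign y | MeasurableSpace.generateFrom C] =ᵐ[μ] 0 :=
    condExp_ae_eq_zero_of_isPiSystem (isPiSystem_Icc_const_left 0 x)
      (MeasurableSpace.generateFrom_le fun _ ⟨_, hs⟩ => hs ▸ measurableSet_Icc)
      (.of_bound measurable_halvesSign.aestronglyMeasurable 1 (ae_of_all _ hf_le)) h_univ h_gen
  have hL1 :
      ∫ t, |μ[halvesSign y | MeasurableSpace.generateFrom C] t - halvesSign y t| ∂μ = 1 := by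
    rw [integral_congr_ae (g := fun _ => 1) (hcond.mono fun t ht => by simp [ht, abs_halvesSign])]
    simp
  refine ⟨⟨halvesSign y, measurable_halvesSign, hf_le, hcond, hL1⟩,
    le_ciSup_of_le ⟨2, ?_⟩ ⟨halvesSign y, measurable_halvesSign, hf_le⟩ hL1.symm.le⟩
  rintro _ ⟨g, rfl⟩
  exact integral_abs_condExp_sub_le_two g.2.1.aestronglyMeasurable g.2.2
end
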